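/- arXiv:1303.3607 — 5 statements merged into one kernel-verified Lean document; each statement's English description precedes it below -/
import Mathlib

section
/- For every integer n ≥ 2, the alternating sum of double zeta values of even weight 2n satisfies ∑_{k=2}^{2n-1} (-1)^k ζ(k, 2n-k) = (1/2) ζ(2n). -/
/-- The Riemann zeta value `ζ(s) = ∑_{k>0} k^{-s}` for a natural number exponent. -/
noncomputable def zetaVal (s : ℕ) : ℝ := ∑' k : ℕ+, (1 : ℝ) / (k : ℝ) ^ s

/-- The double zeta value `ζ(s₁, s₂) = ∑_{k₁ > k₂ > 0} k₁^{-s₁} k₂^{-s₂}`. -/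
noncomputable def doubleZeta (s₁ s₂ : ℕ) : ℝ :=
  ∑' p : {p : ℕ+ × ℕ+ // p.2 < p.1}, (1 : ℝ) / ((p.1.1 : ℝ) ^ s₁ * (p.1.2 : ℝ) ^ s₂)

/-!
For `x > y > 0` the identity `1 / (x y) = (1 / x + 1 / y) / (x + y)` telescopes the alternating
sum of the summands `(-1)^k / (x^k y^(2n-k))` to
`1 / ((x + y) x y^(2n-2)) - 1 / ((x + y) x^(2n-1))`. Summing the first term over `x = y + d`
telescopes in `d` to `(H_{2y} - H_y) / y^(2n-1)`; summing the second over `y < x` gives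
`(H_{2x} - H_x - 1 / (2x)) / x^(2n-1)`. The harmonic parts cancel and
`∑ 1 / (2 x^(2n)) = ζ(2n) / 2` remains.
-/

open Finset Filter Topology

theorem sum_Icc_neg_one_pow_div_pow_mul_pow {x y : ℝ} (hx : x ≠ 0) (hy : y ≠ 0) (hxy : x + y ≠ 0)
    {N : ℕ} (hN : 2 ≤ N) :
    ∑ k ∈ Icc 2 (N - 1), (-1) ^ k / (x ^ k * y ^ (N - k))
      = 1 / ((x + y) * x * y ^ (N - 2)) - (-1) ^ N / ((x + y) * x ^ (N - 1)) := by
  obtain ⟨m, rfl⟩ : ∃ m, N = m + 2 := ⟨N - 2, by omega⟩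
  set h : ℕ → ℝ := fun i => (-1) ^ i / ((x + y) * x ^ i * y ^ (m + 1 - i))
  -- `1 / (x y) = (1 / x + 1 / y) / (x + y)` makes consecutive terms telescope
  have hstep : ∀ i ∈ Ico 1 (m + 1), (-1) ^ (i + 1) / (x ^ (i + 1) * y ^ (m + 2 - (i + 1)))
      = h (i + 1) - h i := by
    intro i hi
    obtain ⟨j, rfl⟩ : ∃ j, m = i + j := ⟨m - i, by have := (mem_Ico.1 hi).2; omega⟩
    simp only [h, show i + j + 2 - (i + 1) = j + 1 by omega, show i + j + 1 - (i + 1) = j by omega,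
      show i + j + 1 - i = j + 1 by omega]
    field_simp
    ring
  rw [show m + 2 - 1 = m + 1 by omega, ← Ico_add_one_right_eq_Icc, ← sum_Ico_add' _ 1 (m + 1) 1,
    sum_congr rfl hstep, sum_Ico_sub h (by omega)]
  simp only [h, show m + 1 - (m + 1) = 0 by omega, show m + 1 - 1 = m by omega,
    show m + 2 - 2 = m by omega]
  field_simp
  ring

theorem hasSum_sub_add_of_antitone {f : ℕ → ℝ} (hf : Antitone f)
    (hf0 : Tendsto f atTop (𝓝 0)) (a : ℕ) :
    HasSum (fun i => f i - f (i + a)) (∑ i ∈ range a, f i) := by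
  rw [hasSum_iff_tendsto_nat_of_nonneg fun i => sub_nonneg.2 (hf (Nat.le_add_right i a))]
  have hpartial : ∀ N, ∑ i ∈ range N, (f i - f (i + a))
      = ∑ i ∈ range a, f i - ∑ i ∈ range a, f (N + i) := by
    intro N
    have h := (sum_range_add f N a).symm.trans (add_comm N a ▸ sum_range_add f a N)
    simp only [add_comm a] at h
    rw [sum_sub_distrib]
    linarith
  simp only [hpartial]
  simpa using tendsto_const_nhds.sub
    (tendsto_finsetSum (range a) fun i _ => hf0.comp (tendsto_add_atTop_nat i))

theorem HasSum.sigma_of_nonneg {α : Type*} {β : α → Type*} {f : (Σ a, β a) → ℝ} (hf : 0 ≤ f)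
    {g : α → ℝ} {c : ℝ} (hfg : ∀ a, HasSum (fun b => f ⟨a, b⟩) (g a)) (hg : HasSum g c) :
    HasSum f c := by
  have hfib a := (hfg a).summable
  have hs : Summable f := (summable_sigma_of_nonneg hf).2
    ⟨hfib, by simpa only [fun a => (hfg a).tsum_eq] using hg.summable⟩
  convert hs.hasSum
  rw [hs.tsum_sigma' hfib, ← hg.tsum_eq]
  exact tsum_congr fun a => (hfg a).tsum_eq.symm

theorem hasSum_zetaVal {s : ℕ} (hs : 2 ≤ s) :
    HasSum (fun k : ℕ+ => (1 : ℝ) / (k : ℝ) ^ s) (zetaVal s) :=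
  ((Real.summable_one_div_nat_pow.2 hs).comp_injective PNat.coe_injective).hasSum

theorem sq_mul_sq_le_pow_mul_pow {x y : ℝ} (hy : 1 ≤ y) (hyx : y ≤ x) {a b : ℕ} (ha : 2 ≤ a)
    (hab : 4 ≤ a + b) : x ^ 2 * y ^ 2 ≤ x ^ a * y ^ b := by
  have hx : 1 ≤ x := hy.trans hyx
  rcases le_or_gt 2 b with hb | hb
  · gcongr
  · calc x ^ 2 * y ^ 2 = x ^ 2 * y ^ (2 - b) * y ^ b := by
          rw [mul_assoc, ← pow_add, Nat.sub_add_cancel hb.le]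
      _ ≤ x ^ 2 * x ^ (2 - b) * y ^ b := by gcongr
      _ = x ^ (4 - b) * y ^ b := by rw [← pow_add]; congr 2; omega
      _ ≤ x ^ a * y ^ b := by gcongr; omega

theorem hasSum_doubleZeta {a b : ℕ} (ha : 2 ≤ a) (hab : 4 ≤ a + b) :
    HasSum (fun p : {p : ℕ+ × ℕ+ // p.2 < p.1} => 1 / ((p.1.1 : ℝ) ^ a * (p.1.2 : ℝ) ^ b))
      (doubleZeta a b) := by
  have hζ := (hasSum_zetaVal le_rfl).summable
  have hprod : Summable fun q : ℕ+ × ℕ+ => 1 / (q.1 : ℝ) ^ 2 * (1 / (q.2 : ℝ) ^ 2) :=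
    hζ.mul_of_nonneg hζ (fun _ => by positivity) (fun _ => by positivity)
  refine (Summable.of_nonneg_of_le (fun _ => by positivity) (fun p => ?_) (hprod.subtype _)).hasSum
  rw [Function.comp_apply, one_div_mul_one_div]
  have hy : (1 : ℝ) ≤ p.1.2 := Nat.one_le_cast.2 p.1.2.pos
  have hyx : (p.1.2 : ℝ) ≤ p.1.1 := by exact_mod_cast p.2.le
  exact one_div_le_one_div_of_le (by positivity) (sq_mul_sq_le_pow_mul_pow hy hyx ha hab)

/-- `H_{2a} - H_a`. -/
noncomputable def harmonicGap (a : ℕ) : ℝ := ∑ j ∈ range a, 1 / ((j : ℝ) + a + 1)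

theorem harmonicGap_nonneg (a : ℕ) : 0 ≤ harmonicGap a :=
  sum_nonneg fun j _ => by positivity

theorem harmonicGap_le_one (a : ℕ) : harmonicGap a ≤ 1 := by
  calc harmonicGap a ≤ (range a).card • (1 / ((a : ℝ) + 1)) :=
        sum_le_card_nsmul _ _ _ fun j _ => by gcongr; simp
    _ = a / (a + 1) := by rw [card_range, nsmul_eq_mul]; ring
    _ ≤ 1 := div_le_one_of_le₀ (by linarith) (by positivity)

theorem harmonicGap_succ (m : ℕ) :
    harmonicGap (m + 1)
      = ∑ j ∈ range m, 1 / ((j : ℝ) + (m + 1 : ℕ) + 1) + 1 / (2 * (m + 1 : ℕ)) := by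
  rw [harmonicGap, sum_range_succ]
  congr 2
  push_cast
  ring

theorem hasSum_harmonicGap (a : ℕ) :
    HasSum (fun d : ℕ+ => 1 / ((a : ℝ) + d) - 1 / (2 * a + d)) (harmonicGap a) := by
  have hf : Antitone fun i : ℕ => 1 / ((i : ℝ) + a + 1) := fun i j hij => by
    dsimp only
    gcongr
  have hf0 : Tendsto (fun i : ℕ => 1 / ((i : ℝ) + a + 1)) atTop (𝓝 0) := by
    refine (tendsto_one_div_add_atTop_nhds_zero_nat.comp (tendsto_add_atTop_nat a)).congr
      fun i => ?_
    simp only [Function.comp, Nat.cast_add]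
  refine (hasSum_pnat_iff_hasSum_succ (f := fun d : ℕ => 1 / ((a : ℝ) + d) - 1 / (2 * a + d))).2 ?_
  rw [harmonicGap]
  convert hasSum_sub_add_of_antitone hf hf0 a using 1
  funext i
  push_cast
  ring_nf

def addPairEquiv : (Σ _ : ℕ+, ℕ+) ≃ {p : ℕ+ × ℕ+ // p.2 < p.1} where
  toFun q := ⟨(q.1 + q.2, q.1), PNat.lt_add_right _ _⟩
  invFun p := ⟨p.1.2, p.1.1 - p.1.2⟩
  left_inv := by
    rintro ⟨a, d⟩
    simp [add_comm a d, PNat.add_sub]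
  right_inv p := Subtype.ext (Prod.ext (PNat.add_sub_of_lt p.2) rfl)

def finPairEquiv : (Σ x : ℕ+, Fin x.natPred) ≃ {p : ℕ+ × ℕ+ // p.2 < p.1} where
  toFun q := ⟨(q.1, Nat.succPNat q.2), by
    rw [← PNat.natPred_lt_natPred, Nat.natPred_succPNat]; exact q.2.2⟩
  invFun p := ⟨p.1.1, p.1.2.natPred, PNat.natPred_lt_natPred.2 p.2⟩
  left_inv := by
    rintro ⟨x, i⟩
    simp
  right_inv p := Subtype.ext (Prod.ext rfl (PNat.succPNat_natPred _))

theorem summable_harmonicGap_div_pow {s : ℕ} (hs : 2 ≤ s) :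
    Summable fun a : ℕ+ => harmonicGap a / (a : ℝ) ^ s :=
  (hasSum_zetaVal hs).summable.of_nonneg_of_le
    (fun a => div_nonneg (harmonicGap_nonneg a) (by positivity))
    (fun a => div_le_div_of_nonneg_right (harmonicGap_le_one a) (by positivity))

theorem hasSum_one_div_add_mul_mul_pow {s : ℕ} (hs : 2 ≤ s) :
    HasSum (fun p : {p : ℕ+ × ℕ+ // p.2 < p.1} =>
        1 / (((p.1.1 : ℝ) + p.1.2) * p.1.1 * (p.1.2 : ℝ) ^ (s - 1)))
      (∑' a : ℕ+, harmonicGap a / (a : ℝ) ^ s) := by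
  rw [← addPairEquiv.hasSum_iff]
  refine HasSum.sigma_of_nonneg (fun q => by simp [addPairEquiv]; positivity) (fun a => ?_)
    (summable_harmonicGap_div_pow hs).hasSum
  refine ((hasSum_harmonicGap a).div_const ((a : ℝ) ^ s)).congr_fun fun d => ?_
  have hpow : (a : ℝ) ^ s = (a : ℝ) ^ (s - 1) * a := by
    rw [← pow_succ, Nat.sub_add_cancel (by omega)]
  simp only [addPairEquiv, Equiv.coe_fn_mk, Function.comp_apply, PNat.add_coe, Nat.cast_add, hpow]
  field_simp
  ring

theorem hasSum_one_div_add_mul_pow {s : ℕ} (hs : 2 ≤ s) :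
    HasSum (fun p : {p : ℕ+ × ℕ+ // p.2 < p.1} => 1 / (((p.1.1 : ℝ) + p.1.2) * (p.1.1 : ℝ) ^ s))
      (∑' a : ℕ+, harmonicGap a / (a : ℝ) ^ s - 1 / 2 * zetaVal (s + 1)) := by
  rw [← finPairEquiv.hasSum_iff]
  refine HasSum.sigma_of_nonneg
    (g := fun a : ℕ+ => harmonicGap a / (a : ℝ) ^ s - 1 / 2 * (1 / (a : ℝ) ^ (s + 1)))
    (fun q => by simp [finPairEquiv]; positivity) (fun x => ?_)
    ((summable_harmonicGap_div_pow hs).hasSum.sub ((hasSum_zetaVal (by omega)).mul_left (1 / 2)))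
  convert hasSum_fintype _ using 1
  simp only [finPairEquiv, Equiv.coe_fn_mk, Function.comp_apply, Nat.succPNat_coe]
  -- the terms `1 / (x + y)`, `y < x`, make up `harmonicGap x` without its last term `1 / (2 x)`
  rw [Fin.sum_univ_eq_sum_range (fun i => 1 / (((x : ℝ) + (i.succ : ℕ)) * (x : ℝ) ^ s)) x.natPred,
    ← PNat.natPred_add_one x, harmonicGap_succ, add_div, div_div, mul_assoc, ← pow_succ',
    one_div_mul_one_div, add_sub_cancel_right, sum_div]
  refine sum_congr rfl fun i _ => ?_
  rw [div_div]
  push_cast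
  ring

theorem euler_alternating_sum (n : ℕ) (hn : 2 ≤ n) :
    ∑ k ∈ Finset.Icc 2 (2 * n - 1), (-1 : ℝ) ^ k * doubleZeta k (2 * n - k)
      = (1 / 2) * zetaVal (2 * n) := by
  have hterms : HasSum (fun p : {p : ℕ+ × ℕ+ // p.2 < p.1} =>
        ∑ k ∈ Icc 2 (2 * n - 1), (-1 : ℝ) ^ k * (1 / ((p.1.1 : ℝ) ^ k * (p.1.2 : ℝ) ^ (2 * n - k))))
      (∑ k ∈ Icc 2 (2 * n - 1), (-1 : ℝ) ^ k * doubleZeta k (2 * n - k)) :=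
    hasSum_sum fun k hk => (hasSum_doubleZeta (mem_Icc.1 hk).1 (by omega)).mul_left _
  have hdiff := (hasSum_one_div_add_mul_mul_pow (s := 2 * n - 1) (by omega)).sub
    (hasSum_one_div_add_mul_pow (s := 2 * n - 1) (by omega))
  rw [sub_sub_cancel, show 2 * n - 1 + 1 = 2 * n by omega] at hdiff
  refine hterms.unique (hdiff.congr_fun fun p => ?_)
  have hx : (0 : ℝ) < p.1.1 := by positivity
  have hy : (0 : ℝ) < p.1.2 := by positivity
  simp only [mul_one_div]
  rw [sum_Icc_neg_one_pow_div_pow_mul_pow hx.ne' hy.ne' (by positivity) (by omega : 2 ≤ 2 * n),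
    (even_two_mul n).neg_one_pow, show 2 * n - 1 - 1 = 2 * n - 2 by omega]
end

section
/- For every integer n ≥ 2, the sum ∑_{k=1}^{n-1} ζ(2k) ζ(2n-2k) equals ((2n+1)/2) ζ(2n). -/
open Finset PowerSeries
open scoped Nat

theorem Finset.sum_range_two_mul_add_one_of_odd_eq_zero {M : Type*} [AddCommMonoid M]
    {f : ℕ → M} (hf : ∀ k, Odd k → f k = 0) (m : ℕ) :
    ∑ k ∈ range (2 * m + 1), f k = ∑ i ∈ range (m + 1), f (2 * i) := by
  induction m with
  | zero => simp
  | succ m ih =>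
    rw [show 2 * (m + 1) + 1 = 2 * m + 1 + 1 + 1 by ring, sum_range_succ, sum_range_succ, ih,
      hf _ (odd_two_mul_add_one m), add_zero, sum_range_succ (n := m + 1)]
    rfl

theorem PowerSeries.bernoulliPowerSeries_sq (A : Type*) [CommRing A] [Algebra ℚ A] :
    bernoulliPowerSeries A ^ 2 =
      bernoulliPowerSeries A - X * bernoulliPowerSeries A -
        X * d⁄dX A (bernoulliPowerSeries A) := by
  set B := bernoulliPowerSeries A
  have hB : B * (exp A - 1) = X := bernoulliPowerSeries_mul_exp_sub_one A
  have hB' : B * exp A + (exp A - 1) * d⁄dX A B = 1 := by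
    simpa [Derivation.leibniz, derivative_exp, add_comm] using congrArg (d⁄dX A) hB
  linear_combination B * hB' - d⁄dX A B * hB - B * hB

noncomputable def bernoulliCoeff (k : ℕ) : ℚ := bernoulli k / k !

theorem coeff_bernoulliPowerSeries (k : ℕ) :
    coeff k (bernoulliPowerSeries ℚ) = bernoulliCoeff k := by
  simp [bernoulliPowerSeries, bernoulliCoeff]

theorem bernoulliCoeff_zero : bernoulliCoeff 0 = 1 := by simp [bernoulliCoeff]

theorem bernoulliCoeff_eq_zero_of_odd {k : ℕ} (hk : Odd k) (hk1 : k ≠ 1) :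
    bernoulliCoeff k = 0 := by
  rw [bernoulliCoeff, bernoulli_eq_zero_of_odd hk (by grind), zero_div]

theorem sum_range_bernoulliCoeff_mul (N : ℕ) (hN : N ≠ 0) :
    ∑ k ∈ range (N + 1), bernoulliCoeff k * bernoulliCoeff (N - k) =
      (1 - N) * bernoulliCoeff N - bernoulliCoeff (N - 1) := by
  obtain ⟨M, rfl⟩ := Nat.exists_eq_add_one_of_ne_zero hN
  have h := congrArg (coeff (M + 1)) (bernoulliPowerSeries_sq ℚ)
  rw [sq, coeff_mul, Nat.sum_antidiagonal_eq_sum_range_succ_mk, map_sub, map_sub,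
    coeff_succ_X_mul, coeff_succ_X_mul, coeff_derivative] at h
  simp only [coeff_bernoulliPowerSeries] at h
  rw [h, add_tsub_cancel_right]
  push_cast
  ring

theorem sum_Icc_bernoulliCoeff_two_mul (n : ℕ) (hn : 2 ≤ n) :
    ∑ k ∈ Icc 1 (n - 1), bernoulliCoeff (2 * k) * bernoulliCoeff (2 * n - 2 * k) =
      -(2 * n + 1) * bernoulliCoeff (2 * n) := by
  have hlast : bernoulliCoeff (2 * n - 1) = 0 :=
    bernoulliCoeff_eq_zero_of_odd ⟨n - 1, by omega⟩ (by omega)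
  have hodd : ∀ k, Odd k → bernoulliCoeff k * bernoulliCoeff (2 * n - k) = 0 := by
    intro k hk
    rcases eq_or_ne k 1 with rfl | hk1
    · rw [hlast, mul_zero]
    · rw [bernoulliCoeff_eq_zero_of_odd hk hk1, zero_mul]
  have h := sum_range_bernoulliCoeff_mul (2 * n) (by omega)
  rw [sum_range_two_mul_add_one_of_odd_eq_zero hodd, hlast, sum_range_succ,
    sum_range_eq_add_Ico _ (by omega)] at h
  rw [← Ico_add_one_right_eq_Icc, Nat.sub_add_cancel (by omega)]
  simp only [mul_zero, Nat.sub_zero, Nat.sub_self, bernoulliCoeff_zero] at h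
  push_cast at h ⊢
  linear_combination h

open Real in
theorem two_mul_zetaVal_two_mul (k : ℕ) (hk : k ≠ 0) :
    2 * zetaVal (2 * k) = (-1) ^ (k + 1) * (2 * π) ^ (2 * k) * bernoulliCoeff (2 * k) := by
  obtain ⟨j, rfl⟩ := Nat.exists_eq_add_one_of_ne_zero hk
  rw [zetaVal, tsum_pnat_eq_tsum_of_eq_zero (f := fun m : ℕ ↦ 1 / (m : ℝ) ^ (2 * (j + 1)))
    (by simp), (hasSum_zeta_nat hk).tsum_eq, bernoulliCoeff,
    show 2 * (j + 1) - 1 = 2 * j + 1 by omega]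
  push_cast
  ring

open Real in
theorem zetaVal_two_mul_mul_zetaVal_two_mul_sub {n k : ℕ} (hk : k ≠ 0) (hkn : k < n) :
    zetaVal (2 * k) * zetaVal (2 * n - 2 * k) =
      (-1) ^ n * (2 * π) ^ (2 * n) / 4 *
        (bernoulliCoeff (2 * k) * bernoulliCoeff (2 * n - 2 * k) : ℚ) := by
  have hsign : (-1 : ℝ) ^ (k + 1) * (-1) ^ (n - k + 1) = (-1) ^ n := by
    rw [← pow_add, show k + 1 + (n - k + 1) = n + 2 by omega, pow_add]
    norm_num
  have hpow : (2 * π) ^ (2 * k) * (2 * π) ^ (2 * (n - k)) = (2 * π) ^ (2 * n) := by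
    rw [← pow_add]
    congr 1
    omega
  rw [← Nat.mul_sub, show ∀ a b : ℝ, a * b = (2 * a) * (2 * b) / 4 by intros; ring,
    two_mul_zetaVal_two_mul k hk, two_mul_zetaVal_two_mul (n - k) (by omega), ← hsign, ← hpow]
  push_cast
  ring

open Real in
theorem zeta_even_convolution (n : ℕ) (hn : 2 ≤ n) :
    ∑ k ∈ Finset.Icc 1 (n - 1), zetaVal (2 * k) * zetaVal (2 * n - 2 * k)
      = ((2 * n + 1 : ℝ) / 2) * zetaVal (2 * n) := by
  have hterm : ∀ k ∈ Icc 1 (n - 1), zetaVal (2 * k) * zetaVal (2 * n - 2 * k) =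
      (-1) ^ n * (2 * π) ^ (2 * n) / 4 *
        (bernoulliCoeff (2 * k) * bernoulliCoeff (2 * n - 2 * k) : ℚ) := fun k hk ↦
    zetaVal_two_mul_mul_zetaVal_two_mul_sub (by grind) (by grind)
  have hconv : ((∑ k ∈ Icc 1 (n - 1),
      bernoulliCoeff (2 * k) * bernoulliCoeff (2 * n - 2 * k) : ℚ) : ℝ) =
      -(2 * n + 1) * bernoulliCoeff (2 * n) := by
    exact_mod_cast sum_Icc_bernoulliCoeff_two_mul n hn
  have hζ := two_mul_zetaVal_two_mul n (by omega)
  rw [pow_succ] at hζ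
  rw [sum_congr rfl hterm, ← mul_sum, ← Rat.cast_sum, hconv]
  linear_combination (-(2 * n + 1 : ℝ) / 4) * hζ
end

section
/- For all integers a ≥ 2 and b ≥ 2, the stuffle (harmonic product) relation holds: ζ(a) ζ(b) = ζ(a, b) + ζ(b, a) + ζ(a + b). -/
lemma summable_pnat_pow {s : ℕ} (hs : 2 ≤ s) :
    Summable (fun k : ℕ+ => (1 : ℝ) / (k : ℝ) ^ s) := by
  have h : Summable (fun n : ℕ => (1 : ℝ) / (n : ℝ) ^ s) :=
    Real.summable_one_div_nat_pow.mpr (by omega)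
  exact h.comp_injective (fun k l h => PNat.coe_injective h)

theorem stuffle_relation (a b : ℕ) (ha : 2 ≤ a) (hb : 2 ≤ b) :
    zetaVal a * zetaVal b = doubleZeta a b + doubleZeta b a + zetaVal (a + b) := by
  classical
  set g : ℕ+ → ℝ := fun k => (1 : ℝ) / (k : ℝ) ^ a with hg_def
  set h : ℕ+ → ℝ := fun k => (1 : ℝ) / (k : ℝ) ^ b with hh_def
  have hg : Summable g := summable_pnat_pow ha
  have hh : Summable h := summable_pnat_pow hb
  set F : ℕ+ × ℕ+ → ℝ := fun p => g p.1 * h p.2 with hF_def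
  have hgnn : ∀ k, 0 ≤ g k := fun k => by positivity
  have hhnn : ∀ k, 0 ≤ h k := fun k => by positivity
  have hF : Summable F := hg.mul_of_nonneg hh hgnn hhnn
  have step1 : zetaVal a * zetaVal b = ∑' p : ℕ+ × ℕ+, F p :=
    Summable.tsum_mul_tsum hg hh hF
  set A : Set (ℕ+ × ℕ+) := {p | p.2 < p.1} with hA_def
  set B : Set (ℕ+ × ℕ+) := {p | p.1 < p.2} with hB_def
  set C : Set (ℕ+ × ℕ+) := {p | p.1 = p.2} with hC_def
  have hdecomp : F = fun p => A.indicator F p + B.indicator F p + C.indicator F p := by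
    funext p
    rcases lt_trichotomy p.1 p.2 with hlt | heq | hgt
    · rw [Set.indicator_of_notMem (by simp [hA_def]; exact le_of_lt hlt),
        Set.indicator_of_mem (by exact hlt),
        Set.indicator_of_notMem (by simp [hC_def]; exact ne_of_lt hlt)]
      ring
    · rw [Set.indicator_of_notMem (by simp [hA_def, heq]),
        Set.indicator_of_notMem (by simp [hB_def, heq]),
        Set.indicator_of_mem (by exact heq)]
      ring
    · rw [Set.indicator_of_mem (by exact hgt),
        Set.indicator_of_notMem (by simp [hB_def]; exact le_of_lt hgt),
        Set.indicator_of_notMem (by simp [hC_def]; exact (ne_of_lt hgt).symm)]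
      ring
  have hsplit : ∑' p : ℕ+ × ℕ+, F p =
      (∑' p, A.indicator F p) + (∑' p, B.indicator F p) + (∑' p, C.indicator F p) := by
    conv_lhs => rw [hdecomp]
    rw [Summable.tsum_add ((hF.indicator A).add (hF.indicator B)) (hF.indicator C),
      Summable.tsum_add (hF.indicator A) (hF.indicator B)]
  have hA_eq : (∑' p, A.indicator F p) = doubleZeta a b := by
    rw [← tsum_subtype A F]
    apply tsum_congr
    intro p
    show g p.1.1 * h p.1.2 = _
    simp only [hg_def, hh_def]
    rw [div_mul_div_comm, one_mul]
  have hB_eq : (∑' p, B.indicator F p) = doubleZeta b a := by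
    rw [← tsum_subtype B F]
    let e : {p : ℕ+ × ℕ+ // p.2 < p.1} ≃ B :=
      { toFun := fun q => ⟨(q.1.2, q.1.1), q.2⟩
        invFun := fun q => ⟨(q.1.2, q.1.1), q.2⟩
        left_inv := fun q => rfl
        right_inv := fun q => rfl }
    rw [← e.tsum_eq (fun p : B => F p)]
    apply tsum_congr
    intro q
    have hq : ((e q : {p : ℕ+ × ℕ+ // p ∈ B}) : ℕ+ × ℕ+) = (q.1.2, q.1.1) := rfl
    simp only [hF_def, hg_def, hh_def, hq]
    rw [div_mul_div_comm, one_mul, mul_comm ((q.1.2:ℝ)^a)]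
  have hC_eq : (∑' p, C.indicator F p) = zetaVal (a + b) := by
    rw [← tsum_subtype C F]
    let d : ℕ+ ≃ C :=
      { toFun := fun k => ⟨(k, k), rfl⟩
        invFun := fun q => q.1.1
        left_inv := fun k => rfl
        right_inv := fun q => by
          rcases q with ⟨⟨x, y⟩, hq⟩
          have : x = y := hq
          subst this
          rfl }
    rw [← d.tsum_eq (fun p : C => F p)]
    unfold zetaVal
    apply tsum_congr
    intro k
    have hq : ((d k : {p : ℕ+ × ℕ+ // p ∈ C}) : ℕ+ × ℕ+) = (k, k) := rfl
    simp only [hF_def, hg_def, hh_def, hq]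
    rw [div_mul_div_comm, one_mul, ← pow_add]
  rw [step1, hsplit, hA_eq, hB_eq, hC_eq]
end

section
/- For every real number t > 0, the infinite product ∏_{i=1}^{∞} (1 − t/i⁴) converges and equals sin(π t^{1/4}) · sinh(π t^{1/4}) / (π² √t). -/
open Real Filter

lemma euler_sin_div (x : ℝ) (hx : x ≠ 0) :
    Tendsto (fun n : ℕ => ∏ j ∈ Finset.range n, (1 - x^2 / ((j:ℝ)+1)^2)) atTop
      (nhds (Real.sin (π*x) / (π*x))) := by
  have h := Real.tendsto_euler_sin_prod x
  have hπx : (π * x) ≠ 0 := mul_ne_zero Real.pi_ne_zero hx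
  have h2 := h.const_mul (π*x)⁻¹
  have h3 : Tendsto (fun n : ℕ => ∏ j ∈ Finset.range n, (1 - x^2 / ((j:ℝ)+1)^2)) atTop
      (nhds ((π*x)⁻¹ * Real.sin (π*x))) := by
    refine h2.congr fun n => ?_
    rw [← mul_assoc, inv_mul_cancel₀ hπx, one_mul]
  rw [inv_mul_eq_div] at h3
  exact h3

lemma euler_sinh_div (x : ℝ) (hx : x ≠ 0) :
    Tendsto (fun n : ℕ => ∏ j ∈ Finset.range n, (1 + x^2 / ((j:ℝ)+1)^2)) atTop
      (nhds (Real.sinh (π*x) / (π*x))) := by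
  have h := Complex.tendsto_euler_sin_prod (x * Complex.I)
  have hπx : ((π : ℂ) * ((x : ℂ) * Complex.I)) ≠ 0 := by
    simp [Real.pi_ne_zero, Complex.I_ne_zero, Complex.ofReal_eq_zero, hx]
  have h2 := h.const_mul ((π : ℂ) * ((x : ℂ) * Complex.I))⁻¹
  have h3 : Tendsto (fun n : ℕ => ((∏ j ∈ Finset.range n, (1 + x^2 / ((j:ℝ)+1)^2) : ℝ) : ℂ))
      atTop (nhds (((π : ℂ) * ((x : ℂ) * Complex.I))⁻¹
        * Complex.sin ((π : ℂ) * ((x : ℂ) * Complex.I)))) := by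
    refine h2.congr fun n => ?_
    rw [← mul_assoc, inv_mul_cancel₀ hπx, one_mul]
    push_cast
    refine (Finset.prod_congr rfl fun j _ => ?_).symm
    rw [mul_pow, Complex.I_sq]
    ring
  have hsin : Complex.sin ((π : ℂ) * ((x : ℂ) * Complex.I)) = Real.sinh (π * x) * Complex.I := by
    rw [← mul_assoc, ← Complex.ofReal_mul, Complex.sin_mul_I, Complex.ofReal_sinh]
  rw [hsin] at h3
  have hval : ((π : ℂ) * ((x : ℂ) * Complex.I))⁻¹ * ((Real.sinh (π * x) : ℂ) * Complex.I)
      = ((Real.sinh (π*x) / (π*x) : ℝ) : ℂ) := by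
    have hπ : (π : ℂ) ≠ 0 := by exact_mod_cast Complex.ofReal_ne_zero.mpr Real.pi_ne_zero
    have hxc : (x : ℂ) ≠ 0 := Complex.ofReal_ne_zero.mpr hx
    have hI : (Complex.I : ℂ) ≠ 0 := Complex.I_ne_zero
    push_cast
    field_simp
  rw [hval] at h3
  have h4 := (Complex.continuous_re.tendsto _).comp h3
  simpa only [Function.comp_def, Complex.ofReal_re] using h4

lemma euler_both (x : ℝ) (hx : x ≠ 0) :
    Tendsto (fun n : ℕ => ∏ j ∈ Finset.range n, (1 - x^4 / ((j:ℝ)+1)^4)) atTop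
      (nhds (Real.sin (π*x) * Real.sinh (π*x) / (π^2 * x^2))) := by
  have h := (euler_sin_div x hx).mul (euler_sinh_div x hx)
  have heq : ∀ n : ℕ, (∏ j ∈ Finset.range n, (1 - x^2 / ((j:ℝ)+1)^2))
      * (∏ j ∈ Finset.range n, (1 + x^2 / ((j:ℝ)+1)^2))
      = ∏ j ∈ Finset.range n, (1 - x^4 / ((j:ℝ)+1)^4) := by
    intro n
    rw [← Finset.prod_mul_distrib]
    refine Finset.prod_congr rfl fun j _ => ?_
    have hj : ((j:ℝ)+1) ≠ 0 := by positivity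
    field_simp
    ring
  have hlim : Real.sin (π*x) / (π*x) * (Real.sinh (π*x) / (π*x))
      = Real.sin (π*x) * Real.sinh (π*x) / (π^2 * x^2) := by
    rw [div_mul_div_comm]
    congr 1
    ring
  rw [hlim] at h
  exact h.congr heq

lemma pnat_summable_aux (t : ℝ) : Summable (fun i : ℕ+ => t / (i : ℝ)^4) := by
  have h0 : Summable (fun n : ℕ => 1 / ((n:ℝ))^4) :=
    Real.summable_one_div_nat_pow.mpr (by norm_num)
  have h1 : Summable (fun n : ℕ => 1 / ((n:ℝ)+1)^4) := by
    have := (summable_nat_add_iff 1).mpr h0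
    refine this.congr fun n => ?_
    push_cast
    ring
  have h2 : Summable (fun i : ℕ+ => 1 / (i : ℝ)^4) := by
    refine (Equiv.pnatEquivNat.symm.summable_iff).mp ?_
    refine h1.congr fun n => ?_
    simp [Equiv.pnatEquivNat, Nat.succPNat]
  have := h2.mul_left t
  refine this.congr fun i => ?_
  rw [mul_one_div]

set_option maxHeartbeats 1000000 in
lemma mult_aux (t : ℝ) (ht : 0 < t) : Multipliable (fun i : ℕ+ => 1 - t / (i : ℝ)^4) := by
  set f : ℕ+ → ℝ := fun i => 1 - t / (i : ℝ)^4 with hf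
  obtain ⟨N, hN⟩ := exists_nat_gt (2*t)
  set N' : ℕ+ := ⟨N+1, Nat.succ_pos N⟩ with hN'
  have hNc : ((N' : ℕ) : ℝ) = (N:ℝ)+1 := by
    have : (N' : ℕ) = N+1 := rfl
    rw [this]; push_cast; ring
  have hsmall : ∀ i : ℕ+, i ∉ Set.Iic N' → t / (i:ℝ)^4 < 1/2 := by
    intro i hi
    have hlt : N' < i := not_le.mp hi
    have h1 : (1:ℝ) ≤ (i:ℝ) := by exact_mod_cast i.one_le
    have hi4 : (i:ℝ) ≤ (i:ℝ)^4 := le_self_pow₀ h1 (by norm_num)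
    have h2t : 2*t < (i:ℝ) := by
      have hc : ((N':ℕ):ℝ) < ((i:ℕ):ℝ) := by exact_mod_cast hlt
      rw [hNc] at hc
      linarith
    have h2t4 : 2*t < (i:ℝ)^4 := lt_of_lt_of_le h2t hi4
    rw [div_lt_iff₀ (by positivity)]
    linarith
  have hpos : ∀ i : ↥((Set.Iic N')ᶜ), 0 < f i.1 := by
    rintro ⟨i, hi⟩
    have h2 := hsmall i hi
    simp only [hf]
    have : t / (i:ℝ)^4 < 1 := lt_trans h2 (by norm_num)
    linarith
  have hlogsum : Summable (fun i : ↥((Set.Iic N')ᶜ) => Real.log (f i.1)) := by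
    have hb : Summable ((fun i : ℕ+ => 2 * (t / (i:ℝ)^4)) ∘ ((↑) : ↥((Set.Iic N')ᶜ) → ℕ+)) :=
      ((pnat_summable_aux t).mul_left 2).subtype _
    have hneg : Summable (fun i : ↥((Set.Iic N')ᶜ) => - Real.log (f i.1)) := by
      refine Summable.of_nonneg_of_le (fun i => ?_) (fun i => ?_) hb
      · obtain ⟨i, hi⟩ := i
        have hu : t/(i:ℝ)^4 < 1/2 := hsmall i hi
        have h1 : f i ≤ 1 := by
          simp only [hf]
          have : (0:ℝ) ≤ t / (i:ℝ)^4 := by positivity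
          linarith
        have := Real.log_nonpos (hpos ⟨i, hi⟩).le h1
        linarith
      · obtain ⟨i, hi⟩ := i
        have hu : t/(i:ℝ)^4 < 1/2 := hsmall i hi
        have hu0 : (0:ℝ) < t/(i:ℝ)^4 := by positivity
        set u := t/(i:ℝ)^4 with hudef
        have h1u0 : (0:ℝ) < 1 - u := by linarith
        have hfu : f i = 1 - u := rfl
        have hlog : - Real.log (f i) = Real.log ((1-u)⁻¹) := by
          rw [hfu, Real.log_inv]
        have hle : Real.log ((1-u)⁻¹) ≤ (1-u)⁻¹ - 1 :=
          Real.log_le_sub_one_of_pos (by positivity)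
        have hinv : (1-u)⁻¹ ≤ 2 := by
          have h12 : (1:ℝ)/2 ≤ 1 - u := by linarith
          have := one_div_le_one_div_of_le (by norm_num : (0:ℝ) < 1/2) h12
          rw [one_div] at this
          norm_num at this
          linarith
        have hmulinv : (1-u) * (1-u)⁻¹ = 1 := mul_inv_cancel₀ (ne_of_gt h1u0)
        show - Real.log (f i) ≤ 2 * u
        rw [hlog]
        nlinarith [hle, hinv, hmulinv, hu0.le]
    have h2 := hneg.neg
    exact h2.congr fun i => neg_neg _
  have hmulc : Multipliable (fun i : ↥((Set.Iic N')ᶜ) => f i.1) := by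
    have hp := hlogsum.hasSum.rexp
    exact ⟨_, hp.congr fun s => Finset.prod_congr rfl fun i _ => Real.exp_log (hpos i)⟩
  have hfin : (Set.Iic N').Finite := Set.finite_Iic N'
  have : Finite ↥(Set.Iic N') := hfin
  have hmuls : Multipliable ((f ∘ (↑)) : ↥(Set.Iic N') → ℝ) := Multipliable.of_finite
  exact hmuls.mul_compl hmulc

theorem infinite_product_sin_sinh (t : ℝ) (ht : 0 < t) :
    Multipliable (fun i : ℕ+ => 1 - t / (i : ℝ) ^ 4) ∧
    ∏' i : ℕ+, (1 - t / (i : ℝ) ^ 4)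
      = Real.sin (π * t ^ ((1 : ℝ) / 4)) * Real.sinh (π * t ^ ((1 : ℝ) / 4))
        / (π ^ 2 * Real.sqrt t) := by
  have hM := mult_aux t ht
  refine ⟨hM, ?_⟩
  set x : ℝ := t ^ ((1:ℝ)/4) with hx
  have hx0 : 0 < x := Real.rpow_pos_of_pos ht _
  have hx4 : x^4 = t := by
    rw [hx, ← Real.rpow_natCast (t ^ ((1:ℝ)/4)) 4, ← Real.rpow_mul ht.le]
    norm_num
  have hx2 : x^2 = Real.sqrt t := by
    rw [hx, ← Real.rpow_natCast (t ^ ((1:ℝ)/4)) 2, ← Real.rpow_mul ht.le, Real.sqrt_eq_rpow]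
    norm_num
  have hE := euler_both x (ne_of_gt hx0)
  rw [hx4, hx2] at hE
  have hg : HasProd ((fun i : ℕ+ => 1 - t / (i:ℝ)^4) ∘ Equiv.pnatEquivNat.symm)
      (∏' i : ℕ+, (1 - t / (i:ℝ)^4)) := (Equiv.hasProd_iff _).mpr hM.hasProd
  have hT := hg.tendsto_prod_nat
  have hT' : Tendsto (fun n : ℕ => ∏ j ∈ Finset.range n, (1 - t / ((j:ℝ)+1)^4)) atTop
      (nhds (∏' i : ℕ+, (1 - t / (i:ℝ)^4))) := by
    refine hT.congr fun n => Finset.prod_congr rfl fun j _ => ?_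
    simp [Equiv.pnatEquivNat, Nat.succPNat]
  exact tendsto_nhds_unique hT' hE
end

section
/- For every odd positive integer k, the alternating convolution sum of even zeta values vanishes: ∑_{m+l=k, m,l≥0} (−1)^m ζ(2m) ζ(2l) = 0, where the convention ζ(0) = −1/2 is used. -/
/-! The zeta values play no role: as `m + l = k` is odd, `(-1)^m` and `(-1)^l` have opposite
signs, so the terms indexed by `(m, l)` and `(l, m)` cancel. -/

/-- The Riemann zeta value `ζ(s) = ∑_{k>0} k^{-s}` for a natural number exponent,
with the convention `ζ(0) = −1/2`. -/
noncomputable def zetaE (s : ℕ) : ℝ :=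
  if s = 0 then -1 / 2 else ∑' k : ℕ+, (1 : ℝ) / (k : ℝ) ^ s

open Finset HasAntidiagonal

/-- `¬Even n` says exactly that the swap has no fixed point on the antidiagonal, so the terms
cancel in pairs. -/
theorem Finset.sum_antidiagonal_eq_zero_of_add_swap_eq_zero {A M : Type*} [AddCommMonoid A]
    [HasAntidiagonal A] [AddCommMonoid M] {n : A} (hn : ¬Even n) (g : A × A → M)
    (hg : ∀ p ∈ antidiagonal n, g p + g p.swap = 0) :
    ∑ p ∈ antidiagonal n, g p = 0 := by
  refine sum_involution (fun p _ ↦ p.swap) hg (fun p hp _ hfix ↦ hn ⟨p.1, ?_⟩)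
    (fun p hp ↦ HasAntidiagonal.swap_mem_antidiagonal.mpr hp) (fun p _ ↦ p.swap_swap)
  have hdiag : p.2 = p.1 := congrArg Prod.fst hfix
  rw [← (mem_antidiagonal.mp hp), hdiag]

theorem neg_one_pow_mul_add_neg_one_pow_mul_eq_zero {R : Type*} [CommRing R] {i j : ℕ}
    (hij : Odd (i + j)) (a b : R) : (-1) ^ i * a * b + (-1) ^ j * b * a = 0 := by
  have hsign : (-1 : R) ^ j = -(-1) ^ i := by
    rcases Nat.even_or_odd i with hi | hi
    · rw [hi.neg_one_pow, ((Nat.odd_add'.mp hij).mpr hi).neg_one_pow]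
    · rw [hi.neg_one_pow, ((Nat.odd_add.mp hij).mp hi).neg_one_pow, neg_neg]
  rw [hsign]
  ring

theorem alternating_convolution_odd_general (k : ℕ) (hodd : Odd k) :
    ∑ p ∈ Finset.HasAntidiagonal.antidiagonal k, (-1 : ℝ) ^ p.1 * zetaE (2 * p.1) * zetaE (2 * p.2)
      = 0 :=
  sum_antidiagonal_eq_zero_of_add_swap_eq_zero (Nat.not_even_iff_odd.mpr hodd) _ fun p hp ↦
    neg_one_pow_mul_add_neg_one_pow_mul_eq_zero (by rwa [Prod.fst_swap, mem_antidiagonal.mp hp]) _ _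

theorem alternating_convolution_odd (k : ℕ) (hk : 0 < k) (hodd : Odd k) :
    ∑ p ∈ Finset.HasAntidiagonal.antidiagonal k, (-1 : ℝ) ^ p.1 * zetaE (2 * p.1) * zetaE (2 * p.2)
      = 0 :=
  alternating_convolution_odd_general k hodd
end
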